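/- Let $1<p<\infty$, $m \ge 1$ an integer with $mp > n$. There is a constant $C>0$ such that for all $\xi \in S$ and $0<\delta<1$, the function $f_{\xi,\delta}(z) = (\log\frac{2}{\delta})^{-1/p} \log\frac{2}{1-\langle z,(1-\delta)\xi\rangle}$ satisfies: (a) $|f_{\xi,\delta}(z)| \ge c\,(\log\frac{2}{\delta})^{1-1/p}$ for all $z \in Q_\delta(\xi)$, with $c>0$ independent of $\xi,\delta$. -/

import Mathlib

open MeasureTheory Metric Set

noncomputable section

/-- `C^n` as a Euclidean space. -/
abbrev En (n : ℕ) := EuclideanSpace ℂ (Fin n)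

instance En.measureSpace {n : ℕ} : MeasureSpace (En n) :=
  { volume := Measure.map (WithLp.toLp 2) (volume : Measure (Fin n → ℂ)) }

/-- The Hermitian pairing of z and w. -/
def herm {n : ℕ} (z w : En n) : ℂ := ∑ j, z j * (starRingEnd ℂ) (w j)

/-- The Carleson box Q_delta(xi). -/
def Qbox {n : ℕ} (δ : ℝ) (ξ : En n) : Set (En n) :=
  {z | z ∈ Metric.ball (0 : En n) 1 ∧ ‖1 - herm z ξ‖ < δ}

/-- The pseudo-hyperbolic ball E(w,r), described via the identity
1 - |phi_w z|^2 = (1-|w|^2)(1-|z|^2)/|1-herm z w|^2. -/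
def Eball {n : ℕ} (w : En n) (r : ℝ) : Set (En n) :=
  {z | z ∈ Metric.ball (0 : En n) 1 ∧
    1 - r ^ 2 < (1 - ‖w‖ ^ 2) * (1 - ‖z‖ ^ 2) / ‖1 - herm z w‖ ^ 2}

/-- The radial derivative R f (z) = sum_j z_j d f / d z_j, i.e. the derivative
of f at z in the direction z. -/
def radialDeriv {n : ℕ} (f : En n → ℂ) (z : En n) : ℂ := fderiv ℂ f z z

/-!
With `a = ⟨z, ξ⟩` we have `|a| ≤ 1` and `|1 - a| < δ`, so `w = 1 - (1 - δ) a` satisfies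
`0 < |w| ≤ min (2δ, 2 - δ)`. Then `|w| ≤ 3/2` gives `|w|⁴ ≤ 8δ`, i.e. `log (2/δ) ≤ 4 log (2/|w|)`,
and `log (2/|w|)` is the real part of `log (2/w)`. Hence `c = 1/4` works.
-/

theorem herm_eq_inner {n : ℕ} (z w : En n) : herm z w = inner ℂ w z := by
  simp [herm, PiLp.inner_apply]

theorem norm_herm_le {n : ℕ} (z w : En n) : ‖herm z w‖ ≤ ‖z‖ * ‖w‖ := by
  rw [herm_eq_inner, mul_comm]
  exact norm_inner_le_norm w z

theorem herm_real_smul_right {n : ℕ} (z w : En n) (r : ℝ) : herm z (r • w) = r * herm z w := by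
  rw [herm_eq_inner, herm_eq_inner, ← Complex.coe_smul, inner_smul_left, Complex.conj_ofReal]

theorem log_two_div_le_four_mul_log_two_div {δ t : ℝ} (hδ : 0 < δ) (ht : 0 < t)
    (ht_le₁ : t ≤ 2 * δ) (ht_le₂ : t ≤ 2 - δ) :
    Real.log (2 / δ) ≤ 4 * Real.log (2 / t) := by
  have ht32 : t ≤ 3 / 2 := by
    rcases le_or_gt δ (3 / 4) with h | h <;> linarith
  have hpow : t ^ 4 ≤ 8 * δ := by
    have : t ^ 3 ≤ (3 / 2) ^ 3 := pow_le_pow_left₀ ht.le ht32 3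
    nlinarith
  rw [show 4 * Real.log (2 / t) = Real.log ((2 / t) ^ 4) by rw [Real.log_pow]; norm_num]
  refine Real.log_le_log (by positivity) ?_
  rw [div_pow, div_le_div_iff₀ hδ (by positivity)]
  linarith

theorem log_two_div_norm_le_norm_log (w : ℂ) :
    Real.log (2 / ‖w‖) ≤ ‖Complex.log (2 / w)‖ := by
  calc Real.log (2 / ‖w‖) = (Complex.log (2 / w)).re := by
        rw [Complex.log_re, norm_div, Complex.norm_ofNat]
    _ ≤ ‖Complex.log (2 / w)‖ := Complex.re_le_norm _

theorem norm_one_sub_ofReal_mul_bounds {a : ℂ} {δ : ℝ} (ha : ‖a‖ ≤ 1) (hδ : 0 < δ) (hδ1 : δ < 1)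
    (hδa : ‖1 - a‖ < δ) :
    0 < ‖1 - (1 - δ : ℝ) * a‖ ∧ ‖1 - (1 - δ : ℝ) * a‖ ≤ 2 * δ ∧
      ‖1 - (1 - δ : ℝ) * a‖ ≤ 2 - δ := by
  have hscaled : ‖((1 - δ : ℝ) : ℂ) * a‖ ≤ 1 - δ := by
    rw [norm_mul, Complex.norm_real, Real.norm_of_nonneg (by linarith)]
    nlinarith [norm_nonneg a]
  refine ⟨?_, ?_, ?_⟩
  · have := norm_sub_norm_le (1 : ℂ) (((1 - δ : ℝ) : ℂ) * a)
    rw [norm_one] at this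
    linarith
  · have hsplit : 1 - ((1 - δ : ℝ) : ℂ) * a = (1 - a) + (δ : ℂ) * a := by push_cast; ring
    calc ‖1 - ((1 - δ : ℝ) : ℂ) * a‖ ≤ ‖1 - a‖ + ‖(δ : ℂ) * a‖ := hsplit ▸ norm_add_le _ _
      _ ≤ δ + δ := by
        gcongr
        rw [norm_mul, Complex.norm_real, Real.norm_of_nonneg hδ.le]
        nlinarith
      _ = 2 * δ := by ring
  · calc ‖1 - ((1 - δ : ℝ) : ℂ) * a‖ ≤ ‖(1 : ℂ)‖ + ‖((1 - δ : ℝ) : ℂ) * a‖ := norm_sub_le _ _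
      _ ≤ 2 - δ := by rw [norm_one]; linarith

theorem stmt_11_general (n : ℕ) (p : ℝ) :
    ∃ c : ℝ, 0 < c ∧ ∀ ξ ∈ Metric.sphere (0 : En n) 1, ∀ δ : ℝ, 0 < δ → δ < 1 →
      ∀ z ∈ Qbox δ ξ,
        c * Real.log (2 / δ) ^ (1 - 1 / p) ≤
          ‖((Real.log (2 / δ) ^ (-(1 / p)) : ℝ) : ℂ) *
            Complex.log (2 / (1 - herm z ((1 - δ) • ξ)))‖ := by
  refine ⟨1 / 4, by norm_num, fun ξ hξ δ hδ hδ1 z ⟨hz, hzξ⟩ => ?_⟩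
  have ha : ‖herm z ξ‖ ≤ 1 := by
    have := norm_herm_le z ξ
    rw [mem_sphere_zero_iff_norm.mp hξ, mul_one] at this
    linarith [mem_ball_zero_iff.mp hz]
  obtain ⟨hw0, hw, hw'⟩ := norm_one_sub_ofReal_mul_bounds ha hδ hδ1 hzξ
  have hL : 0 < Real.log (2 / δ) := Real.log_pos (by rw [lt_div_iff₀ hδ]; linarith)
  have hpow : Real.log (2 / δ) ^ (1 - 1 / p) =
      Real.log (2 / δ) ^ (-(1 / p)) * Real.log (2 / δ) := by
    rw [sub_eq_neg_add, Real.rpow_add_one hL.ne']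
  rw [herm_real_smul_right, norm_mul, Complex.norm_real, Real.norm_of_nonneg (by positivity), hpow]
  calc 1 / 4 * (Real.log (2 / δ) ^ (-(1 / p)) * Real.log (2 / δ))
      = Real.log (2 / δ) ^ (-(1 / p)) * (Real.log (2 / δ) / 4) := by ring
    _ ≤ Real.log (2 / δ) ^ (-(1 / p)) * Real.log (2 / ‖1 - (1 - δ : ℝ) * herm z ξ‖) := by
        gcongr
        linarith [log_two_div_le_four_mul_log_two_div hδ hw0 hw hw']
    _ ≤ _ := by gcongr; exact log_two_div_norm_le_norm_log _

/-- lower bound for the logarithmic test functions on the Carleson box. -/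
theorem stmt_11 (n : ℕ) (p : ℝ) (hp : 1 < p) (m : ℕ) (hm : 0 < m)
    (hmp : (n : ℝ) < m * p) :
    ∃ c : ℝ, 0 < c ∧ ∀ ξ ∈ Metric.sphere (0 : En n) 1, ∀ δ : ℝ, 0 < δ → δ < 1 →
      ∀ z ∈ Qbox δ ξ,
        c * Real.log (2 / δ) ^ (1 - 1 / p) ≤
          ‖((Real.log (2 / δ) ^ (-(1 / p)) : ℝ) : ℂ) *
            Complex.log (2 / (1 - herm z ((1 - δ) • ξ)))‖ :=
  stmt_11_general n p
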